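/- Let ρ: g → gl(V) be a representation of a finite-dimensional Lie algebra g, with trace form B_ρ(x,y) = tr(ρ(x)ρ(y)). Define the induced trace form on the Nahm algebra by C_ρ(X,Y) = tr(L_ρ(X)L_ρ(Y)), where L_ρ(X) is the block operator on V³ with blocks (L_ρ(X))₁₂ = -½ρ(x₃), (L_ρ(X))₁₃ = ½ρ(x₂), (L_ρ(X))₂₁ = ½ρ(x₃), (L_ρ(X))₂₃ = -½ρ(x₁), (L_ρ(X))₃₁ = -½ρ(x₂), (L_ρ(X))₃₂ = ½ρ(x₁), and zero diagonal blocks. Then C_ρ(X,Y) = -½(B_ρ(x₁,y₁) + B_ρ(x₂,y₂) + B_ρ(x₃,y₃)). -/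

import Mathlib

attribute [local instance] LieRing.ofAssociativeRing

/-- The block operator `L_ρ(X)` on `V³` induced by a representation `ρ` of a Lie
algebra: its `(i, i+1)` block is `-½ρ(x_{i+2})` and its `(i, i+2)` block is `½ρ(x_{i+1})`. -/
def Lrho (𝕜 : Type*) [RCLike 𝕜] {L V : Type*} [LieRing L] [LieAlgebra 𝕜 L]
    [AddCommGroup V] [Module 𝕜 V] (ρ : L →ₗ⁅𝕜⁆ Module.End 𝕜 V) (X : Fin 3 → L) :
    (Fin 3 → V) →ₗ[𝕜] (Fin 3 → V) :=
  (2 : 𝕜)⁻¹ • LinearMap.pi fun i =>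
    (ρ (X (i + 1))).comp (LinearMap.proj (i + 2) : (Fin 3 → V) →ₗ[𝕜] V) -
      (ρ (X (i + 2))).comp (LinearMap.proj (i + 1) : (Fin 3 → V) →ₗ[𝕜] V)

/-!
The trace of an endomorphism of `V³` is the sum of the traces of its diagonal blocks. The `(i, i)`
block of `L_ρ(X) L_ρ(Y)` is `-¼ (ρ(x_{i+1}) ρ(y_{i+1}) + ρ(x_{i+2}) ρ(y_{i+2}))` (indices mod 3),
so summing over `i` every `B_ρ(x_j, y_j)` occurs twice, with coefficient `-½`.
-/

namespace LinearMap

theorem trace_pi_eq_sum {R ι : Type*} [CommRing R] [Fintype ι] [DecidableEq ι]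
    {M : ι → Type*} [∀ i, AddCommGroup (M i)] [∀ i, Module R (M i)]
    [∀ i, Module.Free R (M i)] [∀ i, Module.Finite R (M i)]
    (f : ((i : ι) → M i) →ₗ[R] (i : ι) → M i) :
    trace R _ f = ∑ i, trace R (M i) (proj i ∘ₗ f ∘ₗ single R M i) := by
  have hf : f = ∑ i, single R M i ∘ₗ proj i ∘ₗ f := by
    refine LinearMap.ext fun x => ?_
    simp [Finset.univ_sum_single]
  conv_lhs => rw [hf]
  refine (map_sum _ _ _).trans (Finset.sum_congr rfl fun i _ => ?_)
  exact trace_comp_comm' (proj i ∘ₗ f) (single R M i)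

end LinearMap

section Lrho

variable {𝕜 L V : Type*} [RCLike 𝕜] [LieRing L] [LieAlgebra 𝕜 L] [AddCommGroup V] [Module 𝕜 V]
  (ρ : L →ₗ⁅𝕜⁆ Module.End 𝕜 V)

theorem Lrho_apply (X : Fin 3 → L) (v : Fin 3 → V) (i : Fin 3) :
    Lrho 𝕜 ρ X v i = (2 : 𝕜)⁻¹ • (ρ (X (i + 1)) (v (i + 2)) - ρ (X (i + 2)) (v (i + 1))) :=
  rfl

theorem Lrho_single_apply_add_one (X : Fin 3 → L) (i : Fin 3) (w : V) :
    Lrho 𝕜 ρ X (Pi.single i w) (i + 1) = (2 : 𝕜)⁻¹ • ρ (X (i + 2)) w := by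
  have h₁ : i + 1 + 2 = i := by fin_cases i <;> rfl
  have h₂ : i + 1 + 1 = i + 2 := by fin_cases i <;> rfl
  have h₃ : i + 2 ≠ i := by fin_cases i <;> decide
  simp [Lrho_apply, h₁, h₂, h₃]

theorem Lrho_single_apply_add_two (X : Fin 3 → L) (i : Fin 3) (w : V) :
    Lrho 𝕜 ρ X (Pi.single i w) (i + 2) = -((2 : 𝕜)⁻¹ • ρ (X (i + 1)) w) := by
  have h₁ : i + 2 + 1 = i := by fin_cases i <;> rfl
  have h₂ : i + 2 + 2 = i + 1 := by fin_cases i <;> rfl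
  have h₃ : i + 1 ≠ i := by fin_cases i <;> decide
  simp [Lrho_apply, h₁, h₂, h₃]

theorem proj_Lrho_comp_Lrho_single (X Y : Fin 3 → L) (i : Fin 3) :
    LinearMap.proj i ∘ₗ (Lrho 𝕜 ρ X ∘ₗ Lrho 𝕜 ρ Y) ∘ₗ LinearMap.single 𝕜 (fun _ => V) i =
      -((2 : 𝕜)⁻¹ * (2 : 𝕜)⁻¹) •
        (ρ (X (i + 1)) ∘ₗ ρ (Y (i + 1)) + ρ (X (i + 2)) ∘ₗ ρ (Y (i + 2))) := by
  ext w
  simp only [LinearMap.comp_apply, LinearMap.proj_apply, LinearMap.coe_single]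
  rw [Lrho_apply, Lrho_single_apply_add_one, Lrho_single_apply_add_two]
  simp only [map_neg, map_smul, LinearMap.add_apply, LinearMap.smul_apply, LinearMap.comp_apply]
  module

end Lrho

theorem nahm_trace_form_eq (𝕜 : Type*) [RCLike 𝕜] (L : Type*) [LieRing L] [LieAlgebra 𝕜 L]
    (V : Type*) [AddCommGroup V] [Module 𝕜 V] [FiniteDimensional 𝕜 V]
    (ρ : L →ₗ⁅𝕜⁆ Module.End 𝕜 V) (X Y : Fin 3 → L) :
    LinearMap.trace 𝕜 (Fin 3 → V) ((Lrho 𝕜 ρ X) ∘ₗ (Lrho 𝕜 ρ Y)) =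
      -(2 : 𝕜)⁻¹ * ∑ i : Fin 3, LinearMap.trace 𝕜 V (ρ (X i) ∘ₗ ρ (Y i)) := by
  set B : Fin 3 → 𝕜 := fun i => LinearMap.trace 𝕜 V (ρ (X i) ∘ₗ ρ (Y i))
  have hshift (k : Fin 3) : ∑ i, B (i + k) = ∑ i, B i :=
    Fintype.sum_equiv (Equiv.addRight k) _ _ fun _ => rfl
  rw [LinearMap.trace_pi_eq_sum]
  simp only [proj_Lrho_comp_Lrho_single, map_smul, map_add, smul_eq_mul, ← Finset.mul_sum,
    Finset.sum_add_distrib]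
  rw [hshift 1, hshift 2]
  ring
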